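/- arXiv:1612.03364 — 2 statements merged into one kernel-verified Lean document; each statement's English description precedes it below -/
import Mathlib

section
/- Let 𝕄 be a family of subsets of {1,…,n}, and let f : ℝⁿ → ℝ be differentiable and satisfy (ξ, δ, 𝕄)-WRSC with ξ > 0 and 0 < δ < 1. Then for all x, y ∈ ℝⁿ with supp(x) ∪ supp(y) ⊆ S for some S ∈ 𝕄, one has f(x) ≤ f(y) + ⟨∇f(y), x − y⟩ + ((1 + δ)/(2ξ))‖x − y‖₂². -/
set_option maxHeartbeats 1000000


open scoped RealInnerProductSpace
open Classical

/-- The restriction `x_S` of a vector `x ∈ ℝⁿ` to a coordinate set `S`: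
it agrees with `x` on `S` and is zero elsewhere. -/
noncomputable def restr {n : ℕ} (S : Set (Fin n)) (x : EuclideanSpace ℝ (Fin n)) :
    EuclideanSpace ℝ (Fin n) := WithLp.toLp 2 (fun i => if i ∈ S then x i else 0)

/-- The support `supp(x) = {i : x_i ≠ 0}` of a vector. -/
def supp {n : ℕ} (x : EuclideanSpace ℝ (Fin n)) : Set (Fin n) := {i | x i ≠ 0}

/-- `f` satisfies `(ξ, δ, 𝕄)`-Weak Restricted Strong Convexity:
`‖x − y − ξ∇_S f(x) + ξ∇_S f(y)‖ ≤ δ‖x − y‖` for all `x, y` and all `S ∈ 𝕄`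
with `supp(x) ∪ supp(y) ⊆ S`. -/
def WRSC {n : ℕ} (f : EuclideanSpace ℝ (Fin n) → ℝ) (ξ δ : ℝ)
    (𝕄 : Set (Set (Fin n))) : Prop :=
  ∀ x y : EuclideanSpace ℝ (Fin n), ∀ S ∈ 𝕄, supp x ∪ supp y ⊆ S →
    ‖x - y - ξ • restr S (gradient f x) + ξ • restr S (gradient f y)‖ ≤ δ * ‖x - y‖

lemma inner_restr {n : ℕ} (S : Set (Fin n)) (a v : EuclideanSpace ℝ (Fin n))
    (hv : supp v ⊆ S) : ⟪restr S a, v⟫ = ⟪a, v⟫ := by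
  simp only [PiLp.inner_apply, RCLike.inner_apply, conj_trivial]
  apply Finset.sum_congr rfl
  intro i _
  by_cases h : v i = 0
  · simp [h]
  · have hi : i ∈ S := hv h
    simp [restr, hi]

/-- Lemma 6.2, second inequality: under `(ξ, δ, 𝕄)`-WRSC,
`f(x) ≤ f(y) + ⟨∇f(y), x − y⟩ + ((1+δ)/(2ξ))‖x−y‖²` whenever
`supp(x) ∪ supp(y) ⊆ S` for some `S ∈ 𝕄`. -/
theorem wrsc_restricted_smoothness {n : ℕ} (𝕄 : Set (Set (Fin n)))
    (f : EuclideanSpace ℝ (Fin n) → ℝ) (hf : Differentiable ℝ f)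
    (ξ δ : ℝ) (hξ : 0 < ξ) (hδ : δ ∈ Set.Ioo (0 : ℝ) 1)
    (hW : WRSC f ξ δ 𝕄) :
    ∀ x y : EuclideanSpace ℝ (Fin n), (∃ S ∈ 𝕄, supp x ∪ supp y ⊆ S) →
      f x ≤ f y + ⟪gradient f y, x - y⟫ + ((1 + δ) / (2 * ξ)) * ‖x - y‖ ^ 2 := by
  rintro x y ⟨S, hS, hsupp⟩
  set v : EuclideanSpace ℝ (Fin n) := x - y with hv
  have hvS : supp v ⊆ S := by
    intro i hi
    by_contra hiS
    have hx : x i = 0 := by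
      by_contra h; exact hiS (hsupp (Or.inl h))
    have hy : y i = 0 := by
      by_contra h; exact hiS (hsupp (Or.inr h))
    exact hi (by simp [hv, PiLp.sub_apply, hx, hy])
  set C : ℝ := (1 + δ) / (2 * ξ) with hC
  set φ : ℝ → ℝ := fun t => f (y + t • v) - t * ⟪gradient f y, v⟫ - C * t ^ 2 * ‖v‖ ^ 2
    with hφ
  -- derivative of φ
  have hderiv : ∀ t : ℝ, HasDerivAt φ
      (⟪gradient f (y + t • v), v⟫ - ⟪gradient f y, v⟫ - C * (2 * t) * ‖v‖ ^ 2) t := by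
    intro t
    have hL : HasDerivAt (fun t : ℝ => y + t • v) v t := by
      simpa using ((hasDerivAt_id t).smul_const v).const_add y
    have hgrad : HasGradientAt f (gradient f (y + t • v)) (y + t • v) :=
      (hf _).hasGradientAt
    have h1 : HasDerivAt (fun t : ℝ => f (y + t • v))
        ⟪gradient f (y + t • v), v⟫ t := by
      have := (hgrad.hasFDerivAt).comp_hasDerivAt t hL
      simpa [InnerProductSpace.toDual_apply_apply, Function.comp_def] using this
    have h2 : HasDerivAt (fun t : ℝ => t * ⟪gradient f y, v⟫)
        ⟪gradient f y, v⟫ t := by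
      simpa using (hasDerivAt_id t).mul_const (⟪gradient f y, v⟫)
    have h3 : HasDerivAt (fun t : ℝ => C * t ^ 2 * ‖v‖ ^ 2)
        (C * (2 * t) * ‖v‖ ^ 2) t := by
      have := ((hasDerivAt_pow 2 t).const_mul C).mul_const (‖v‖ ^ 2)
      simpa [mul_comm, mul_assoc, mul_left_comm] using this
    exact (h1.sub h2).sub h3
  -- the key gradient inequality
  have hkey : ∀ t : ℝ, 0 ≤ t →
      ⟪gradient f (y + t • v), v⟫ - ⟪gradient f y, v⟫ ≤ (1 + δ) / ξ * t * ‖v‖ ^ 2 := by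
    intro t ht
    set z : EuclideanSpace ℝ (Fin n) := y + t • v with hz
    have hzsupp : supp z ∪ supp y ⊆ S := by
      rintro i (hi | hi)
      · by_contra hiS
        have hx : x i = 0 := by by_contra h; exact hiS (hsupp (Or.inl h))
        have hy' : y i = 0 := by by_contra h; exact hiS (hsupp (Or.inr h))
        exact hi (by simp [hz, hv, PiLp.add_apply, PiLp.smul_apply, PiLp.sub_apply, hx, hy'])
      · exact hsupp (Or.inr hi)
    have hwrsc := hW z y S hS hzsupp
    set gz := gradient f z
    set gy := gradient f y
    set w : EuclideanSpace ℝ (Fin n) := z - y - ξ • restr S gz + ξ • restr S gy with hw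
    have hzy : z - y = t • v := by simp [hz]
    have hnormzy : ‖z - y‖ = t * ‖v‖ := by
      rw [hzy, norm_smul]; simp [abs_of_nonneg ht]
    have hxi : ξ • (restr S gz - restr S gy) = (z - y) - w := by
      rw [hw]; abel_nf; module
    have hξinner : ξ * ⟪restr S gz - restr S gy, v⟫ = ⟪z - y, v⟫ - ⟪w, v⟫ := by
      rw [← real_inner_smul_left, hxi, inner_sub_left]
    have e1 : ⟪gz, v⟫ - ⟪gy, v⟫ = (1 / ξ) * (⟪z - y, v⟫ - ⟪w, v⟫) := by
      rw [← inner_restr S gz v hvS, ← inner_restr S gy v hvS, ← inner_sub_left,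
        ← hξinner, one_div, inv_mul_cancel_left₀ hξ.ne']
    have e2 : ⟪z - y, v⟫ = t * ‖v‖ ^ 2 := by
      rw [hzy, real_inner_smul_left, real_inner_self_eq_norm_sq]
    have e3 : -⟪w, v⟫ ≤ δ * t * ‖v‖ * ‖v‖ := by
      calc -⟪w, v⟫ ≤ ‖w‖ * ‖v‖ := by
              have := abs_real_inner_le_norm w v
              nlinarith [neg_abs_le ⟪w, v⟫]
        _ ≤ δ * t * ‖v‖ * ‖v‖ := by
              have : ‖w‖ ≤ δ * (t * ‖v‖) := by rw [← hnormzy]; exact hwrsc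
              nlinarith [norm_nonneg v]
    rw [e1, e2]
    have hδpos : 0 < δ := hδ.1
    have h4 : (1/ξ) * (t * ‖v‖^2 - ⟪w, v⟫) ≤ (1/ξ) * (t * ‖v‖^2 + δ * t * ‖v‖ * ‖v‖) := by
      apply mul_le_mul_of_nonneg_left _ (by positivity)
      linarith
    calc (1/ξ) * (t * ‖v‖^2 - ⟪w, v⟫) ≤ (1/ξ) * (t * ‖v‖^2 + δ * t * ‖v‖ * ‖v‖) := h4
      _ = (1 + δ) / ξ * t * ‖v‖ ^ 2 := by ring
  -- φ is antitone on [0,1]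
  have hanti : AntitoneOn φ (Set.Icc 0 1) := by
    apply antitoneOn_of_deriv_nonpos (convex_Icc 0 1)
    · exact fun t _ => ((hderiv t).continuousAt).continuousWithinAt
    · intro t ht
      exact ((hderiv t).differentiableAt).differentiableWithinAt
    · intro t ht
      rw [interior_Icc] at ht
      rw [(hderiv t).deriv]
      have := hkey t ht.1.le
      have h2C : C * (2 * t) = (1 + δ) / ξ * t := by rw [hC]; field_simp
      rw [h2C]
      nlinarith [sq_nonneg ‖v‖]
  have h01 := hanti (Set.mem_Icc.mpr ⟨le_refl 0, zero_le_one⟩)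
    (Set.mem_Icc.mpr ⟨zero_le_one, le_refl 1⟩) zero_le_one
  have hyv : y + (1:ℝ) • v = x := by rw [one_smul, hv]; abel
  have hφ1 : φ 1 = f x - ⟪gradient f y, v⟫ - C * ‖v‖ ^ 2 := by
    simp only [hφ]; rw [hyv]; ring
  have hφ0 : φ 0 = f y := by
    simp only [hφ]; rw [zero_smul, add_zero]; ring
  rw [hφ1, hφ0] at h01
  linarith
end

section
/- Let 𝕄 be a family of subsets of {1,…,n}, and let f : ℝⁿ → ℝ be differentiable and satisfy (ξ, δ, 𝕄)-WRSC with ξ > 0 and 0 < δ < 1. Let x, b ∈ ℝⁿ, Ω ⊆ {1,…,n}, and S ∈ 𝕄 be such that supp(x) ∪ supp(b) ⊆ S, Ω ⊆ S, and (∇f(b))_Ω = 0. Then ‖(x − b)_Ω‖₂ ≤ δ‖b − x‖₂ + ξ‖(∇f(x))_Ω‖₂. -/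
open scoped RealInnerProductSpace
open Classical

lemma restr_sub {n : ℕ} (S : Set (Fin n)) (u v : EuclideanSpace ℝ (Fin n)) :
    restr S (u - v) = restr S u - restr S v := by
  ext i; simp [restr]; split <;> simp

lemma restr_add {n : ℕ} (S : Set (Fin n)) (u v : EuclideanSpace ℝ (Fin n)) :
    restr S (u + v) = restr S u + restr S v := by
  ext i; simp [restr]; split <;> simp

lemma restr_smul {n : ℕ} (S : Set (Fin n)) (c : ℝ) (u : EuclideanSpace ℝ (Fin n)) :
    restr S (c • u) = c • restr S u := by
  ext i; by_cases h : i ∈ S <;> simp [restr, h]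

lemma restr_restr {n : ℕ} {Ω S : Set (Fin n)} (h : Ω ⊆ S) (u : EuclideanSpace ℝ (Fin n)) :
    restr Ω (restr S u) = restr Ω u := by
  ext i
  simp only [restr]
  by_cases hi : i ∈ Ω
  · simp [hi, h hi]
  · simp [hi]

lemma norm_restr_le {n : ℕ} (S : Set (Fin n)) (u : EuclideanSpace ℝ (Fin n)) :
    ‖restr S u‖ ≤ ‖u‖ := by
  rw [EuclideanSpace.norm_eq, EuclideanSpace.norm_eq]
  apply Real.sqrt_le_sqrt
  apply Finset.sum_le_sum
  intro i _
  by_cases h : i ∈ S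
  · simp [restr, h]
  · simp [restr, h]; positivity

/-- Key intermediate estimate of the WRSC convergence theorem: if
`supp(x) ∪ supp(b) ⊆ S ∈ 𝕄`, `Ω ⊆ S` and `(∇f(b))_Ω = 0`, then
`‖(x − b)_Ω‖ ≤ δ‖b − x‖ + ξ‖(∇f(x))_Ω‖`. -/
theorem wrsc_minimizer_estimate {n : ℕ} (𝕄 : Set (Set (Fin n)))
    (f : EuclideanSpace ℝ (Fin n) → ℝ) (hf : Differentiable ℝ f)
    (ξ δ : ℝ) (hξ : 0 < ξ) (hδ : δ ∈ Set.Ioo (0 : ℝ) 1)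
    (hW : WRSC f ξ δ 𝕄)
    (x b : EuclideanSpace ℝ (Fin n)) (Ω : Set (Fin n)) (S : Set (Fin n))
    (hS : S ∈ 𝕄) (hsupp : supp x ∪ supp b ⊆ S) (hΩS : Ω ⊆ S)
    (hgrad : restr Ω (gradient f b) = 0) :
    ‖restr Ω (x - b)‖ ≤ δ * ‖b - x‖ + ξ * ‖restr Ω (gradient f x)‖ := by
  set w := x - b - ξ • restr S (gradient f x) + ξ • restr S (gradient f b) with hw
  have hWb := hW x b S hS hsupp
  have key : restr Ω (x - b) = restr Ω w + ξ • restr Ω (gradient f x) := by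
    rw [hw, restr_add, restr_sub, restr_sub, restr_smul, restr_smul, restr_restr hΩS,
      restr_restr hΩS, hgrad, smul_zero, restr_sub]
    abel
  calc ‖restr Ω (x - b)‖ = ‖restr Ω w + ξ • restr Ω (gradient f x)‖ := by rw [key]
    _ ≤ ‖restr Ω w‖ + ‖ξ • restr Ω (gradient f x)‖ := norm_add_le _ _
    _ ≤ ‖w‖ + ξ * ‖restr Ω (gradient f x)‖ := by
        gcongr
        · exact norm_restr_le _ _
        · rw [norm_smul, Real.norm_eq_abs, abs_of_pos hξ]
    _ ≤ δ * ‖x - b‖ + ξ * ‖restr Ω (gradient f x)‖ := by gcongr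
    _ = δ * ‖b - x‖ + ξ * ‖restr Ω (gradient f x)‖ := by rw [norm_sub_rev]
end
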